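/- With the renaming construction of the previous context, the clause set DL and its renaming R_S(DL) are equisatisfiable: DL has a model if and only if R_S(DL) has a model. -/
import Mathlib


/-- A clause `H ← B`: head and body are finite sets of propositional variables. -/
structure Clause (α : Type) where
  head : Finset α
  body : Finset α
deriving DecidableEq

variable {V : Type} [DecidableEq V]

/-- `I` satisfies the clause `H ← B`: if all body atoms are true, some head atom is true. -/
def satClause {α : Type} (I : α → Bool) (C : Clause α) : Prop :=
  (∀ b ∈ C.body, I b = true) → ∃ h ∈ C.head, I h = true

/-- `I` satisfies a set of clauses. -/
def satSet {α : Type} (I : α → Bool) (N : Set (Clause α)) : Prop :=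
  ∀ C ∈ N, satClause I C

/-- Original variables embedded into the extended signature `V ⊕ V`
(`Sum.inl` = original variable, `Sum.inr` = its fresh `Neg`-variable). -/
def embedClause (C : Clause V) : Clause (V ⊕ V) :=
  ⟨C.head.image Sum.inl, C.body.image Sum.inl⟩

/-- The renamed clause `((H \ S) ∪ Neg(B ∩ S)) ← ((B \ S) ∪ Neg(H ∩ S))`. -/
def renameClause (S : Finset V) (C : Clause V) : Clause (V ⊕ V) :=
  ⟨((C.head \ S).image Sum.inl) ∪ ((C.body ∩ S).image Sum.inr),
   ((C.body \ S).image Sum.inl) ∪ ((C.head ∩ S).image Sum.inr)⟩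

/-- `p` occurs in the clause set `DL`. -/
def occursIn (p : V) (DL : Set (Clause V)) : Prop :=
  ∃ C ∈ DL, p ∈ C.head ∨ p ∈ C.body

/-- The exclusion clause `⊥ ← p ∧ Neg(p)`. -/
def exclClause (p : V) : Clause (V ⊕ V) :=
  ⟨∅, {Sum.inl p, Sum.inr p}⟩

/-- `R_S(DL)`: every original clause, its renamed version, and the exclusion
clauses for variables of `S` occurring in `DL`. -/
def renameSet (S : Finset V) (DL : Set (Clause V)) : Set (Clause (V ⊕ V)) :=
  (embedClause '' DL) ∪ (renameClause S '' DL) ∪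
    {C | ∃ p ∈ S, occursIn p DL ∧ C = exclClause p}

/-- The interpretation `I^S`: agrees with `I` on original variables and
sets `Neg(p)` true iff `p` is false in `I`. -/
def extendI (I : V → Bool) : V ⊕ V → Bool
  | Sum.inl v => I v
  | Sum.inr v => !I v

/-- `DL` and `R_S(DL)` are equisatisfiable. -/
theorem rename_equisatisfiable (S : Finset V) (DL : Set (Clause V)) :
    (∃ I : V → Bool, satSet I DL) ↔ (∃ J : V ⊕ V → Bool, satSet J (renameSet S DL)) := by
  constructor
  · rintro ⟨I, hI⟩
    refine ⟨extendI I, ?_⟩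
    rintro C (hC | hC)
    · rcases hC with ⟨D, hD, rfl⟩ | ⟨D, hD, rfl⟩
      · intro hb
        obtain ⟨h, hh, hIh⟩ := hI D hD (fun b hb' => hb _ (Finset.mem_image_of_mem _ hb'))
        exact ⟨Sum.inl h, Finset.mem_image_of_mem _ hh, hIh⟩
      · intro hb
        by_cases hex : ∃ b ∈ D.body ∩ S, I b = false
        · obtain ⟨b, hbm, hbf⟩ := hex
          refine ⟨Sum.inr b, Finset.mem_union_right _ (Finset.mem_image_of_mem _ hbm), ?_⟩
          simp [extendI, hbf]
        · push_neg at hex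
          have hball : ∀ b ∈ D.body, I b = true := by
            intro b hbm
            by_cases hbS : b ∈ S
            · have := hex b (Finset.mem_inter.mpr ⟨hbm, hbS⟩)
              simpa using this
            · have := hb (Sum.inl b) (Finset.mem_union_left _
                (Finset.mem_image_of_mem _ (Finset.mem_sdiff.mpr ⟨hbm, hbS⟩)))
              simpa [extendI] using this
          obtain ⟨h, hh, hIh⟩ := hI D hD hball
          have hhS : h ∉ S := by
            intro hhS
            have := hb (Sum.inr h) (Finset.mem_union_right _
              (Finset.mem_image_of_mem _ (Finset.mem_inter.mpr ⟨hh, hhS⟩)))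
            simp [extendI, hIh] at this
          exact ⟨Sum.inl h, Finset.mem_union_left _
            (Finset.mem_image_of_mem _ (Finset.mem_sdiff.mpr ⟨hh, hhS⟩)), hIh⟩
    · obtain ⟨p, hpS, hocc, rfl⟩ := hC
      intro hb
      exfalso
      have h1 := hb (Sum.inl p) (by simp [exclClause])
      have h2 := hb (Sum.inr p) (by simp [exclClause])
      simp only [extendI] at h1 h2
      rw [h1] at h2
      simp at h2
  · rintro ⟨J, hJ⟩
    refine ⟨fun v => J (Sum.inl v), ?_⟩
    intro C hC hb
    obtain ⟨h, hh, hJh⟩ := hJ (embedClause C) (Or.inl (Or.inl ⟨C, hC, rfl⟩)) (by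
      intro b hbm
      simp only [embedClause, Finset.mem_image] at hbm
      obtain ⟨b', hb', rfl⟩ := hbm
      exact hb b' hb')
    simp only [embedClause, Finset.mem_image] at hh
    obtain ⟨h', hh', rfl⟩ := hh
    exact ⟨h', hh', hJh⟩
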